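/- arXiv:1601.03937 — 4 statements merged into one kernel-verified Lean document; each statement's English description precedes it below -/
import Mathlib

section
/- The random series W^{(n)} = Z_{n−1} + Σ_{j=1}^∞ D_{(n−j−1):(n−2)}(Z_{n−j−1}, 1−p) is almost surely finite and has expectation E[W^{(n)}] = E[Z_0]/p. -/
/-! By Tonelli the mean of the series is `∑ⱼ E[Yⱼ]`. A `Binomial(k, q)` variable has mean `q k`,
so a `q`-thinning of `Z` has mean `q E[Z]`; hence `E[Yⱼ] = (1 - p)ʲ E[Z]` and the geometric series
gives `E[Z] / p`. A nonnegative variable with finite mean is a.s. finite. -/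

open scoped ENNReal
open MeasureTheory ProbabilityTheory PMF

/-- One-step binomial thinning with retention probability `q`, as a `PMF`-kernel on `ℕ`. -/
noncomputable def thinPMF (q : ℝ≥0∞) (h : q ≤ 1) (k : ℕ) : PMF ℕ :=
  (PMF.binomial q.toNNReal (by simpa using ENNReal.toNNReal_mono ENNReal.one_ne_top h) k).map (Fin.val)

open Finset in
theorem sum_range_natCast_mul_pow_mul_pow_mul_choose {R : Type*} [CommSemiring R] (a b : R)
    (n : ℕ) :
    ∑ i ∈ range (n + 1), (i : R) * (a ^ i * b ^ (n - i) * n.choose i)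
      = n * a * (a + b) ^ (n - 1) := by
  cases n with
  | zero => simp
  | succ m =>
    have hterm (i : ℕ) :
        ((i + 1 : ℕ) : R) * (a ^ (i + 1) * b ^ (m + 1 - (i + 1)) * (m + 1).choose (i + 1))
        = (m + 1 : ℕ) * a * (a ^ i * b ^ (m - i) * m.choose i) := by
      have hchoose : ((i + 1 : ℕ) : R) * (m + 1).choose (i + 1) = (m + 1 : ℕ) * m.choose i := by
        rw [← Nat.cast_mul, ← Nat.cast_mul, mul_comm, Nat.add_one_mul_choose_eq]
      calc _ = a ^ (i + 1) * b ^ (m - i) * (((i + 1 : ℕ) : R) * (m + 1).choose (i + 1)) := by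
            rw [Nat.add_sub_add_right]; ring
        _ = _ := by rw [hchoose]; ring
    rw [sum_range_succ', sum_congr rfl fun i _ => hterm i, ← mul_sum, ← add_pow]
    simp

set_option linter.deprecated false in
theorem PMF.lintegral_val_binomial (p : NNReal) (h : p ≤ 1) (n : ℕ) :
    ∫⁻ i, ((i : ℕ) : ℝ≥0∞) ∂(PMF.binomial p h n).toMeasure = p * n := by
  rw [lintegral_fintype]
  simp_rw [PMF.toMeasure_apply_singleton _ _ (measurableSet_singleton _), PMF.binomial_apply,
    Fin.val_last]
  rw [Fin.sum_univ_eq_sum_range (fun i => (i : ℝ≥0∞) * (p ^ i * (1 - p) ^ (n - i) * n.choose i)),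
    sum_range_natCast_mul_pow_mul_pow_mul_choose, add_tsub_cancel_of_le (by exact_mod_cast h)]
  simp [mul_comm]

theorem lintegral_thinPMF (q : ℝ≥0∞) (h : q ≤ 1) (k : ℕ) :
    ∫⁻ x, (x : ℝ≥0∞) ∂(thinPMF q h k).toMeasure = q * k := by
  rw [thinPMF, ← PMF.toMeasure_map _ _ .of_discrete, lintegral_map .of_discrete .of_discrete]
  exact (PMF.lintegral_val_binomial _ _ k).trans
    (by rw [ENNReal.coe_toNNReal (ne_top_of_le_ne_top ENNReal.one_ne_top h)])

theorem lintegral_bind_thinPMF (ν : Measure ℕ) (q : ℝ≥0∞) (h : q ≤ 1) :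
    ∫⁻ x, (x : ℝ≥0∞) ∂ν.bind (fun k => (thinPMF q h k).toMeasure) = q * ∫⁻ k, (k : ℝ≥0∞) ∂ν := by
  rw [Measure.lintegral_bind .of_discrete .of_discrete]
  simp_rw [lintegral_thinPMF]
  exact lintegral_const_mul q .of_discrete

theorem lintegral_natCast_of_map_eq_bind_thinPMF {Ω : Type*} [MeasurableSpace Ω] {μ : Measure Ω}
    {X Z : Ω → ℕ} (hX : Measurable X) (hZ : Measurable Z) (q : ℝ≥0∞) (h : q ≤ 1)
    (hlaw : μ.map X = (μ.map Z).bind fun k => (thinPMF q h k).toMeasure) :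
    ∫⁻ ω, (X ω : ℝ≥0∞) ∂μ = q * ∫⁻ ω, (Z ω : ℝ≥0∞) ∂μ := by
  rw [← lintegral_map (f := fun n : ℕ => (n : ℝ≥0∞)) .of_discrete hX, hlaw,
    lintegral_bind_thinPMF, lintegral_map .of_discrete hZ]

/-- The stationary series `W^{(n)} = Z_{n−1} + Σ_{j≥1} D_{(n−j−1):(n−2)}(Z_{n−j−1},1−p)`:
here `Y j` (for `j ≥ 1`) is the `j`-fold thinning of an independent copy of `Z_0`, i.e. it is
conditionally `Binomial(Z, (1−p)^j)`, the `Y j` are independent, and `Y 0` is a copy of `Z_0`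
(the term `Z_{n−1}`).  The series is a.s. finite and its (Lebesgue) mean is `E[Z_0]/p`. -/
theorem stationary_series_finite_and_mean
    {Ω : Type*} [MeasureSpace Ω]
    (p : ℝ≥0∞) (hp0 : 0 < p) (hp1 : p ≤ 1)
    (Z : Ω → ℕ) (hZmeas : Measurable Z) (hZmean : ∫⁻ ω, (Z ω : ℝ≥0∞) < ∞)
    (Y : ℕ → Ω → ℕ) (hYmeas : ∀ j, Measurable (Y j))
    (hYlaw : ∀ j : ℕ, Measure.map (Y j) ℙ
      = (Measure.map Z ℙ).bind
          (fun k => (thinPMF ((1 - p) ^ j) (pow_le_one' (by simp) j) k).toMeasure)) :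
    (∀ᵐ ω ∂(ℙ : Measure Ω), (∑' j : ℕ, (Y j ω : ℝ≥0∞)) < ∞) ∧
    ∫⁻ ω, (∑' j : ℕ, (Y j ω : ℝ≥0∞)) = (∫⁻ ω, (Z ω : ℝ≥0∞)) / p := by
  have hmean : ∫⁻ ω, (∑' j : ℕ, (Y j ω : ℝ≥0∞)) = (∫⁻ ω, (Z ω : ℝ≥0∞)) / p := by
    rw [lintegral_tsum (f := fun j ω => (Y j ω : ℝ≥0∞))
      fun j => (Measurable.of_discrete.comp (hYmeas j)).aemeasurable]
    simp_rw [lintegral_natCast_of_map_eq_bind_thinPMF (hYmeas _) hZmeas _ _ (hYlaw _)]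
    rw [ENNReal.tsum_mul_right, ENNReal.tsum_geometric,
      ENNReal.sub_sub_cancel ENNReal.one_ne_top hp1, ENNReal.div_eq_inv_mul]
  have hmeas : Measurable fun ω => ∑' j : ℕ, (Y j ω : ℝ≥0∞) :=
    Measurable.tsum fun j => Measurable.of_discrete.comp (hYmeas j)
  exact ⟨ae_lt_top hmeas (hmean ▸ (ENNReal.div_lt_top hZmean.ne hp0.ne').ne), hmean⟩
end

section
/- The stationary sequence W^{(n)} satisfies the recursion W^{(n+1)} = D_n(W^{(n)}, 1−p) + Z_n almost surely, i.e., it is a stationary solution of the recursion W_{n+1} = D_n(W_n, 1−p) + Z_n. -/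
open scoped ENNReal
open MeasureTheory ProbabilityTheory

section

variable {Ω : Type*}

open Classical in
/-- `aliveSet Z B b n ω` : the set of indices of particles of cohort `b` (which arrived at
time `b` in quantity `Z b ω`) that are still alive at time `n`: particle `(b,i)` survives
step `t` iff the Bernoulli(1−p) variable `B t (b,i)` equals `true`, thinning being applied
at each of the steps `b+1, …, n−1`. -/
noncomputable def aliveSet (Z : ℤ → Ω → ℕ) (B : ℤ → ℤ × ℕ → Ω → Bool) (b n : ℤ) (ω : Ω) : Finset ℕ :=
  (Finset.range (Z b ω)).filter (fun i => ∀ t ∈ Finset.Ico (b + 1) n, B t (b, i) ω = true)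

/-- The stationary sequence `W^{(n)} = Z_{n−1} + Σ_{j≥1} D_{(n−j−1):(n−2)}(Z_{n−j−1},1−p)`,
realized pathwise as the total number of particles of all cohorts `n−1−j`, `j ≥ 0`,
still alive at time `n`. -/
noncomputable def Wstat (Z : ℤ → Ω → ℕ) (B : ℤ → ℤ × ℕ → Ω → Bool) (n : ℤ) (ω : Ω) : ℝ≥0∞ :=
  ∑' j : ℕ, ((aliveSet Z B (n - 1 - j) n ω).card : ℝ≥0∞)

/-- Index type for the driving family: cohort sizes `Z` and survival indicators `B`. -/
abbrev Idx : Type := ℤ ⊕ (ℤ × ℤ × ℕ)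

abbrev IdxT : Idx → Type
  | .inl _ => ℕ
  | .inr _ => Bool

instance : ∀ i : Idx, MeasurableSpace (IdxT i)
  | .inl _ => inferInstance
  | .inr _ => inferInstance

/-- The combined driving family, as a single indexed family of random variables. -/
def fam (Z : ℤ → Ω → ℕ) (B : ℤ → ℤ × ℕ → Ω → Bool) : ∀ i : Idx, Ω → IdxT i
  | .inl n => Z n
  | .inr tbk => fun ω => B tbk.1 (tbk.2.1, tbk.2.2) ω

end

/-! A particle alive at time `n + 1` either arrived at time `n` (there are `Z n` of these) or was
alive at time `n` and survived the thinning `B n`; splitting off the newest cohort in the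
series defining `Wstat` gives the recursion pathwise.

For stationarity, `Wstat Z B n` is one fixed measurable functional of the driving family shifted
in time by `n`. By independence the law of each shifted family is the product of its marginals,
and these do not depend on the shift. -/

section Pathwise

variable {Ω : Type*} (Z : ℤ → Ω → ℕ) (B : ℤ → ℤ × ℕ → Ω → Bool) (ω : Ω)

lemma aliveSet_add_one_self (b : ℤ) : aliveSet Z B b (b + 1) ω = Finset.range (Z b ω) := by
  simp [aliveSet]

lemma aliveSet_add_one {b n : ℤ} (hbn : b < n) :
    aliveSet Z B b (n + 1) ω = (aliveSet Z B b n ω).filter (fun i => B n (b, i) ω = true) := by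
  ext i
  simp only [aliveSet, Finset.mem_filter,
    ← Finset.insert_Ico_right_eq_Ico_add_one (Int.add_one_le_of_lt hbn), Finset.forall_mem_insert]
  tauto

lemma Wstat_add_one (n : ℤ) :
    Wstat Z B (n + 1) ω
      = (∑' j : ℕ, (((aliveSet Z B (n - 1 - j) n ω).filter
          (fun i => B n (n - 1 - j, i) ω = true)).card : ℝ≥0∞)) + (Z n ω : ℝ≥0∞) := by
  rw [Wstat, tsum_eq_zero_add' ENNReal.summable, add_comm]
  congr 1
  · refine tsum_congr fun j => ?_
    rw [← aliveSet_add_one Z B ω (by omega)]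
    congr 3
    push_cast
    ring
  · rw [Nat.cast_zero, sub_zero, add_sub_cancel_right, aliveSet_add_one_self, Finset.card_range]

end Pathwise

section Shift

variable {Ω : Type*} (Z : ℤ → Ω → ℕ) (B : ℤ → ℤ × ℕ → Ω → Bool)

def shiftZ (s : ℤ) : ℤ → Ω → ℕ := fun k => Z (s + k)

def shiftB (s : ℤ) : ℤ → ℤ × ℕ → Ω → Bool := fun t bi => B (s + t) (s + bi.1, bi.2)

lemma aliveSet_shift (s b n : ℤ) (ω : Ω) :
    aliveSet (shiftZ Z s) (shiftB B s) b n ω = aliveSet Z B (s + b) (s + n) ω := by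
  ext i
  simp only [aliveSet, Finset.mem_filter, Finset.mem_Ico]
  simp only [shiftZ, shiftB]
  refine and_congr_right fun _ => (Equiv.addLeft s).forall_congr fun {t} => ?_
  simp only [Equiv.coe_addLeft]
  exact imp_congr_left (by omega)

lemma Wstat_shift (s n : ℤ) : Wstat (shiftZ Z s) (shiftB B s) n = Wstat Z B (s + n) := by
  funext ω
  refine tsum_congr fun j => ?_
  rw [aliveSet_shift]
  congr 3
  ring

def coordZ : ℤ → (∀ i : Idx, IdxT i) → ℕ := fun k x => x (.inl k)

def coordB : ℤ → ℤ × ℕ → (∀ i : Idx, IdxT i) → Bool := fun t bi x => x (.inr (t, bi.1, bi.2))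

lemma Wstat_eq_comp (n : ℤ) : Wstat Z B n = Wstat coordZ coordB n ∘ fun ω i => fam Z B i ω :=
  rfl

end Shift

section Measurability

lemma Finset.card_eq_tsum_ite {α : Type*} [DecidableEq α] (s : Finset α) :
    (s.card : ℝ≥0∞) = ∑' a, if a ∈ s then 1 else 0 := by
  rw [tsum_eq_sum fun a ha => if_neg ha]
  simp

variable {Ω : Type*} [MeasurableSpace Ω] {Z : ℤ → Ω → ℕ} {B : ℤ → ℤ × ℕ → Ω → Bool}

lemma measurableSet_mem_aliveSet (hZm : ∀ n, Measurable (Z n))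
    (hBm : ∀ t b i, Measurable fun ω => B t (b, i) ω) (b n : ℤ) (i : ℕ) :
    MeasurableSet {ω | i ∈ aliveSet Z B b n ω} := by
  simp only [aliveSet, Finset.mem_filter, Finset.mem_range, Set.ofPred_and, Set.ofPred_forall]
  exact (hZm b measurableSet_Ioi).inter <| .iInter fun t => .iInter fun _ =>
    hBm t b i (measurableSet_singleton true)

lemma measurable_Wstat (hZm : ∀ n, Measurable (Z n))
    (hBm : ∀ t b i, Measurable fun ω => B t (b, i) ω) (n : ℤ) : Measurable (Wstat Z B n) := by
  unfold Wstat
  simp_rw [Finset.card_eq_tsum_ite]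
  exact .tsum fun j => .tsum fun i =>
    .ite (measurableSet_mem_aliveSet hZm hBm _ n i) measurable_const measurable_const

end Measurability

section Law

variable {Ω : Type*} [MeasurableSpace Ω] {μ : Measure Ω}
  {Z : ℤ → Ω → ℕ} {B : ℤ → ℤ × ℕ → Ω → Bool}

lemma measurable_fam (hZm : ∀ n, Measurable (Z n))
    (hBm : ∀ t b i, Measurable fun ω => B t (b, i) ω) : ∀ i, Measurable (fam Z B i)
  | .inl k => hZm k
  | .inr (t, b, i) => hBm t b i

lemma measurable_fam_shift (hZm : ∀ n, Measurable (Z n))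
    (hBm : ∀ t b i, Measurable fun ω => B t (b, i) ω) (s : ℤ) :
    Measurable fun ω i => fam (shiftZ Z s) (shiftB B s) i ω :=
  measurable_pi_lambda _ <| measurable_fam (fun _ => hZm _) (fun _ _ _ => hBm _ _ _)

lemma iIndepFun_fam_shift (h : iIndepFun (fam Z B) μ) (s : ℤ) :
    iIndepFun (fam (shiftZ Z s) (shiftB B s)) μ := by
  have hs := add_right_injective s
  have hshift := h.precomp (g := Sum.map (s + ·) (Prod.map (s + ·) (Prod.map (s + ·) id)))
    (hs.sumMap (hs.prodMap (hs.prodMap Function.injective_id)))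
  rw [iIndepFun_iff_iIndep] at hshift ⊢
  convert hshift using 2 with i
  rcases i with k | ⟨t, b, i⟩ <;> rfl

lemma map_fam_shift {ν : Measure Bool} (hZ : ∀ n, μ.map (Z n) = μ.map (Z 0))
    (hB : ∀ t b i, μ.map (fun ω => B t (b, i) ω) = ν) (s : ℤ) (i : Idx) :
    μ.map (fam (shiftZ Z s) (shiftB B s) i) = μ.map (fam Z B i) := by
  rcases i with k | ⟨t, b, i⟩
  · exact (hZ _).trans (hZ k).symm
  · exact (hB _ _ _).trans (hB t b i).symm

lemma map_pi_fam_shift {ν : Measure Bool} (hZm : ∀ n, Measurable (Z n))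
    (hBm : ∀ t b i, Measurable fun ω => B t (b, i) ω) (h : iIndepFun (fam Z B) μ)
    (hZ : ∀ n, μ.map (Z n) = μ.map (Z 0)) (hB : ∀ t b i, μ.map (fun ω => B t (b, i) ω) = ν)
    (s : ℤ) :
    μ.map (fun ω i => fam (shiftZ Z s) (shiftB B s) i ω) = μ.map (fun ω i => fam Z B i ω) := by
  rw [(iIndepFun_fam_shift h s).map_fun_eq_infinitePi_map
      (measurable_pi_iff.1 (measurable_fam_shift hZm hBm s)),
    h.map_fun_eq_infinitePi_map (measurable_fam hZm hBm)]
  simp_rw [map_fam_shift hZ hB s]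

lemma map_Wstat_eq_map_Wstat {ν : Measure Bool} (hZm : ∀ n, Measurable (Z n))
    (hBm : ∀ t b i, Measurable fun ω => B t (b, i) ω) (h : iIndepFun (fam Z B) μ)
    (hZ : ∀ n, μ.map (Z n) = μ.map (Z 0)) (hB : ∀ t b i, μ.map (fun ω => B t (b, i) ω) = ν)
    (n m : ℤ) : μ.map (Wstat Z B n) = μ.map (Wstat Z B m) := by
  have hG : Measurable (Wstat coordZ coordB 0) :=
    measurable_Wstat (fun _ => measurable_pi_apply _) (fun _ _ _ => measurable_pi_apply _) 0
  have hW (s : ℤ) :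
      Wstat Z B s = Wstat coordZ coordB 0 ∘ fun ω i => fam (shiftZ Z s) (shiftB B s) i ω := by
    rw [← Wstat_eq_comp, Wstat_shift, add_zero]
  rw [hW n, hW m, ← Measure.map_map hG (measurable_fam_shift hZm hBm n),
    ← Measure.map_map hG (measurable_fam_shift hZm hBm m), map_pi_fam_shift hZm hBm h hZ hB,
    map_pi_fam_shift hZm hBm h hZ hB]

end Law

/-- The stationary sequence `W^{(n)}` satisfies the recursion
`W^{(n+1)} = D_n(W^{(n)}, 1−p) + Z_n` almost surely (here: for every `ω`), where
`D_n(W^{(n)}, 1−p)` is the Bernoulli(1−p) thinning `B n` applied to the collection of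
particles alive at time `n`; moreover it is stationary: the law of `W^{(n)}` does not
depend on `n`.  Thus `W^{(n)}` is a stationary solution of `W_{n+1} = D_n(W_n,1−p) + Z_n`. -/
theorem Wstat_recursion
    {Ω : Type*} [MeasureSpace Ω]
    (p : ℝ≥0∞)
    (Z : ℤ → Ω → ℕ) (B : ℤ → ℤ × ℕ → Ω → Bool)
    (hmeasZ : ∀ n, Measurable (Z n)) (hmeasB : ∀ t b i, Measurable (fun ω => B t (b, i) ω))
    (hIndep : iIndepFun (fam Z B) ℙ)
    (hBlaw : ∀ t b i, Measure.map (fun ω => B t (b, i) ω) ℙ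
      = (PMF.bernoulli (1 - p).toNNReal (by
        rw [← ENNReal.coe_le_coe, ENNReal.coe_toNNReal (by simp)]; exact tsub_le_self)).toMeasure)
    (hZlaw : ∀ n, Measure.map (Z n) ℙ = Measure.map (Z 0) ℙ) :
    (∀ ω : Ω, ∀ n : ℤ,
      Wstat Z B (n + 1) ω
        = (∑' j : ℕ,
            (((aliveSet Z B (n - 1 - j) n ω).filter
                (fun i => B n (n - 1 - j, i) ω = true)).card : ℝ≥0∞))
          + (Z n ω : ℝ≥0∞)) ∧
    (∀ n m : ℤ, Measure.map (Wstat Z B n) (ℙ : Measure Ω)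
        = Measure.map (Wstat Z B m) (ℙ : Measure Ω)) :=
  ⟨fun ω n => Wstat_add_one Z B ω n, map_Wstat_eq_map_Wstat hmeasZ hmeasB hIndep hZlaw hBlaw⟩
end

section
/- If each Z_n has a Poisson distribution with parameter c, then each W^{(n)} defined by the infinite series has a Poisson distribution with parameter c/p. -/
/-!
Thinning a Poisson(`c`) variable with retention probability `q` gives a Poisson(`c q`) variable,
so the `j`-th term of the series is Poisson(`c (1 - p)^j`). Independent Poisson laws add, so the
`N`-th partial sum is Poisson with rate `∑_{j<N} c (1 - p)^j`, which increases to `c / p`.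
As the partial sums increase to the series, `{series ≤ x}` is the decreasing intersection of
the events `{partial sum ≤ x}`, whose probabilities are finite sums of Poisson masses,
continuous in the rate.
-/

open scoped ENNReal NNReal
open MeasureTheory ProbabilityTheory PMF

open Filter Topology Finset Real
open scoped Nat

set_option linter.deprecated false in
theorem thinPMF_apply (q : ℝ≥0∞) (h : q ≤ 1) (k n : ℕ) :
    thinPMF q h k n = ENNReal.ofReal (k.choose n * q.toReal ^ n * (1 - q.toReal) ^ (k - n)) := by
  rw [thinPMF, PMF.map_apply]
  rcases le_or_gt n k with hn | hn
  · rw [tsum_eq_single (Fin.ofNat (k + 1) n), if_pos]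
    · exact (PMF.binomial_apply_of_le hn _).symm
    · simp [Nat.mod_eq_of_lt (Nat.lt_succ_of_le hn)]
    · intro i hi
      rw [if_neg]
      rintro rfl
      exact hi (by ext; simp)
  · rw [Nat.choose_eq_zero_of_lt hn]
    simp only [Nat.cast_zero, zero_mul, ENNReal.ofReal_zero]
    exact ENNReal.tsum_eq_zero.mpr fun i => if_neg (by omega)

theorem ENNReal.natCast_le_iff_le_floor {x : ℝ≥0∞} (hx : x ≠ ⊤) {n : ℕ} :
    (n : ℝ≥0∞) ≤ x ↔ n ≤ ⌊x.toNNReal⌋₊ := by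
  rw [Nat.le_floor_iff zero_le, ← ENNReal.coe_le_coe, ENNReal.coe_toNNReal hx,
    ENNReal.coe_natCast]

namespace ProbabilityTheory

theorem hasSum_poisson_mul_binomial (c q : ℝ) (n : ℕ) :
    HasSum (fun k => exp (-c) * c ^ k / k ! * (k.choose n * q ^ n * (1 - q) ^ (k - n)))
      (exp (-(c * q)) * (c * q) ^ n / n !) := by
  set f := fun k => exp (-c) * c ^ k / k ! * (k.choose n * q ^ n * (1 - q) ^ (k - n))
  have hshift : ∀ m, f (m + n) = exp (-c) * (c * q) ^ n / n ! * ((c * (1 - q)) ^ m / m !) := by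
    intro m
    have hfact : ((m + n).choose n : ℝ) * m ! * n ! = (m + n) ! := by
      exact_mod_cast Nat.add_choose_mul_factorial_mul_factorial m n
    have hchoose : ((m + n).choose n : ℝ) ≠ 0 :=
      Nat.cast_ne_zero.mpr (Nat.choose_pos (Nat.le_add_left n m)).ne'
    simp only [f, Nat.add_sub_cancel, ← hfact, mul_pow, pow_add]
    field_simp
  have hvanish : ∑ k ∈ range n, f k = 0 :=
    sum_eq_zero fun k hk => by simp [f, Nat.choose_eq_zero_of_lt (mem_range.mp hk)]
  have hlimit :
      exp (-(c * q)) * (c * q) ^ n / n ! = exp (-c) * (c * q) ^ n / n ! * exp (c * (1 - q)) := by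
    rw [show -(c * q) = -c + c * (1 - q) by ring, Real.exp_add]
    ring
  have hexp := NormedSpace.expSeries_div_hasSum_exp (c * (1 - q))
  rw [← Real.exp_eq_exp_ℝ] at hexp
  rw [← hasSum_nat_add_iff' n, hvanish, sub_zero, funext hshift, hlimit]
  exact hexp.mul_left _

set_option linter.deprecated false in
theorem toMeasure_poissonPMF (r : ℝ≥0) : (poissonPMF r).toMeasure = poissonMeasure r :=
  Measure.ext_of_singleton fun n => by
    rw [toMeasure_apply_singleton _ _ (measurableSet_singleton n), poissonMeasure_singleton]
    rfl

theorem poissonMeasure_zero : poissonMeasure 0 = Measure.dirac 0 :=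
  Measure.ext_of_singleton fun n => by
    rcases eq_or_ne n 0 with rfl | hn
    · simp [poissonMeasure_singleton]
    · simp [poissonMeasure_singleton, hn, Ne.symm hn]

theorem continuous_poissonMeasure_singleton (n : ℕ) :
    Continuous fun r : ℝ≥0 => poissonMeasure r {n} := by
  simp_rw [poissonMeasure_singleton]
  exact ENNReal.continuous_ofReal.comp (by fun_prop)

theorem poissonMeasure_bind_thinPMF (c : ℝ≥0) (q : ℝ≥0∞) (hq : q ≤ 1) :
    (poissonMeasure c).bind (fun k => (thinPMF q hq k).toMeasure)
      = poissonMeasure (c * q.toNNReal) := by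
  refine Measure.ext_of_singleton fun n => ?_
  have hq' : 0 ≤ 1 - q.toReal :=
    sub_nonneg.2 (ENNReal.toReal_le_of_le_ofReal zero_le_one (by simpa using hq))
  have hterm : ∀ k, (thinPMF q hq k).toMeasure {n} * poissonMeasure c {k}
      = ENNReal.ofReal
          (exp (-c) * c ^ k / k ! * (k.choose n * q.toReal ^ n * (1 - q.toReal) ^ (k - n))) := by
    intro k
    rw [toMeasure_apply_singleton _ _ (measurableSet_singleton n), thinPMF_apply,
      poissonMeasure_singleton, mul_comm, ← ENNReal.ofReal_mul (by positivity)]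
  have hsum := hasSum_poisson_mul_binomial c q.toReal n
  rw [Measure.bind_apply (measurableSet_singleton n) (Measurable.of_discrete).aemeasurable,
    lintegral_countable', tsum_congr hterm,
    ← ENNReal.ofReal_tsum_of_nonneg (fun k => by positivity) hsum.summable, hsum.tsum_eq,
    poissonMeasure_singleton]
  rfl

theorem iIndepFun.hasLaw_sum_poissonMeasure {Ω ι : Type*} {mΩ : MeasurableSpace Ω}
    {P : Measure Ω} [IsProbabilityMeasure P] {X : ι → Ω → ℕ} {r : ι → ℝ≥0}
    (hindep : iIndepFun X P)
    (hlaw : ∀ i, HasLaw (X i) (poissonMeasure (r i)) P) (s : Finset ι) :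
    HasLaw (∑ i ∈ s, X i) (poissonMeasure (∑ i ∈ s, r i)) P := by
  classical
  induction s using Finset.induction_on with
  | empty =>
    simpa [poissonMeasure_zero] using
      hasLaw_dirac_of_ae_eq (X := (0 : Ω → ℕ)) (P := P) (x := 0) (by rfl)
  | insert i s hi ih =>
    rw [sum_insert hi, sum_insert hi, add_comm, add_comm (r i)]
    have hindep_i := hindep.indepFun_finsetSum_of_notMem₀ (fun j => (hlaw j).aemeasurable) hi
    exact hindep_i.hasLaw_add_poissonMeasure ih (hlaw i)

theorem map_tsum_natCast_eq_of_tendsto {Ω : Type*} {mΩ : MeasurableSpace Ω} {P : Measure Ω}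
    [IsProbabilityMeasure P] {Y : ℕ → Ω → ℕ} (hY : ∀ j, Measurable (Y j))
    {μ : ℕ → Measure ℕ} {ν : Measure ℕ} [IsProbabilityMeasure ν]
    (hlaw : ∀ N, HasLaw (∑ j ∈ range N, Y j) (μ N) P)
    (hlim : ∀ n, Tendsto (fun N => μ N {n}) atTop (𝓝 (ν {n}))) :
    P.map (fun ω => ∑' j, (Y j ω : ℝ≥0∞)) = ν.map Nat.cast := by
  have hT : Measurable fun ω => ∑' j, (Y j ω : ℝ≥0∞) :=
    .tsum fun j => (Measurable.of_discrete).comp (hY j)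
  have : IsProbabilityMeasure (P.map fun ω => ∑' j, (Y j ω : ℝ≥0∞)) :=
    Measure.isProbabilityMeasure_map hT.aemeasurable
  have : IsProbabilityMeasure (ν.map ((↑) : ℕ → ℝ≥0∞)) :=
    Measure.isProbabilityMeasure_map (Measurable.of_discrete).aemeasurable
  refine Measure.ext_of_Iic _ _ fun x => ?_
  rcases eq_or_ne x ⊤ with rfl | hx
  · simp
  set F := Finset.Iic ⌊x.toNNReal⌋₊
  set A : ℕ → Set Ω := fun N => (∑ j ∈ range N, Y j) ⁻¹' F
  have hcast : ∀ n : ℕ, (n : ℝ≥0∞) ≤ x ↔ n ∈ F := fun n => by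
    rw [Finset.mem_Iic, ENNReal.natCast_le_iff_le_floor hx]
  have hpre : (fun ω => ∑' j, (Y j ω : ℝ≥0∞)) ⁻¹' Set.Iic x = ⋂ N, A N := by
    ext ω
    simp only [A, Set.mem_preimage, Set.mem_Iic, Set.mem_iInter, ENNReal.tsum_eq_iSup_nat,
      iSup_le_iff, Finset.sum_apply, ← Nat.cast_sum, hcast, Finset.mem_coe]
  have hanti : Antitone A := fun N M hNM ω hω => by
    simp only [A, F, Set.mem_preimage, Finset.mem_coe, Finset.mem_Iic, Finset.sum_apply] at hω ⊢
    exact (Finset.sum_le_sum_of_subset (range_subset_range.2 hNM)).trans hω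
  have hval : ∀ N, P (A N) = ∑ n ∈ F, μ N {n} := fun N => by
    rw [sum_measure_singleton, ← (hlaw N).map_eq, Measure.map_apply (by fun_prop) F.measurableSet]
  have hdown : Tendsto (fun N => P (A N)) atTop (𝓝 (P (⋂ N, A N))) :=
    tendsto_measure_iInter_atTop
      (fun N => (measurableSet_preimage (by fun_prop) F.measurableSet).nullMeasurableSet)
      hanti ⟨0, measure_ne_top _ _⟩
  have hcast_pre : ((↑) : ℕ → ℝ≥0∞) ⁻¹' Set.Iic x = F := Set.ext hcast
  rw [Measure.map_apply hT measurableSet_Iic,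
    Measure.map_apply (Measurable.of_discrete) measurableSet_Iic, hcast_pre, hpre,
    ← sum_measure_singleton]
  refine tendsto_nhds_unique hdown ?_
  simp_rw [hval]
  exact tendsto_finsetSum _ fun n _ => hlim n

end ProbabilityTheory

set_option linter.deprecated false in
/-- `Y j` stands for the term `D_{(n−j−1):(n−2)}(Z_{n−j−1}, 1−p)` of `W^{(n)}`
(and `Y 0` for `Z_{n−1}`). -/
theorem stationary_series_poisson
    {Ω : Type*} [MeasureSpace Ω] [IsProbabilityMeasure (ℙ : Measure Ω)]
    (p : ℝ≥0) (c : ℝ≥0) (hp0 : 0 < p) (hp1 : p ≤ 1)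
    (Y : ℕ → Ω → ℕ) (hYmeas : ∀ j, Measurable (Y j))
    (hYindep : iIndepFun Y ℙ)
    (hYlaw : ∀ j : ℕ, Measure.map (Y j) ℙ
      = ((poissonPMF c).toMeasure).bind
          (fun k => (thinPMF ((1 - (p : ℝ≥0∞)) ^ j) (pow_le_one' (by simp) j) k).toMeasure)) :
    Measure.map (fun ω => ∑' j : ℕ, (Y j ω : ℝ≥0∞)) (ℙ : Measure Ω)
      = Measure.map (fun n : ℕ => (n : ℝ≥0∞)) ((poissonPMF (c / p)).toMeasure) := by
  have hlaw : ∀ j, HasLaw (Y j) (poissonMeasure (c * (1 - p) ^ j)) := fun j =>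
    ⟨(hYmeas j).aemeasurable, by
      rw [hYlaw j, toMeasure_poissonPMF, poissonMeasure_bind_thinPMF]
      simp⟩
  have hrates : HasSum (fun j => c * (1 - p) ^ j) (c / p) := by
    have := (NNReal.hasSum_geometric (tsub_lt_self one_pos hp0)).mul_left c
    rwa [tsub_tsub_cancel_of_le hp1, ← div_eq_mul_inv] at this
  rw [toMeasure_poissonPMF]
  exact map_tsum_natCast_eq_of_tendsto hYmeas
    (fun N => hYindep.hasLaw_sum_poissonMeasure hlaw _)
    fun n => ((continuous_poissonMeasure_singleton n).tendsto _).comp hrates.tendsto_sum_nat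
end

section
/- If Z_0 is a nonnegative integer random variable with finite exponential moment E[e^{K_0 Z_0}] < ∞ for some K_0 > 0, then for sufficiently small K > 0 the stationary variable W^{(0)} also has finite exponential moment; more precisely E[e^{K W^{(0)}}] = Π_{n=0}^∞ E[(1 + (e^K − 1)(1−p)^n)^{Z_0}] < ∞. -/
/-!
Since the thinnings `Y_j` are independent, `E[T^{Y_0 + ⋯ + Y_{N-1}}]` factorizes, and the
binomial probability generating function turns the `j`-th factor into
`E[(1 + (T - 1)(1-p)^j)^{Z_0}]`. With `T = e^K` these partial products increase to the
infinite product, and by monotone convergence to `E[e^{K W}]`. For finiteness, convexity of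
`exp` bounds the `j`-th factor by `1 + c (1-p)^j` as soon as `e^K - 1 ≤ K₀`, so the product is
at most `exp (c / p) < ∞`. The finite expectation also forces `Σ_j Y_j < ∞` almost surely, so
the real `tsum` defining `W` is not a junk value.
-/

open scoped ENNReal NNReal
open MeasureTheory ProbabilityTheory PMF

lemma ENNReal.ofReal_mul_ofReal_add_one_sub {q t : ℝ} (hq0 : 0 ≤ q) (hq1 : q ≤ 1) (ht : 1 ≤ t) :
    ENNReal.ofReal q * ENNReal.ofReal t + (1 - ENNReal.ofReal q)
      = ENNReal.ofReal (1 + (t - 1) * q) := by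
  rw [← ENNReal.ofReal_mul hq0, ← ENNReal.ofReal_one, ← ENNReal.ofReal_sub _ hq0,
    ← ENNReal.ofReal_add (by positivity) (by linarith)]
  ring_nf

lemma ENNReal.one_sub_coe_pow {p : ℝ≥0} (hp : p ≤ 1) (n : ℕ) :
    (1 - (p : ℝ≥0∞)) ^ n = ENNReal.ofReal ((1 - p) ^ n) := by
  rw [ENNReal.ofReal_pow (sub_nonneg.2 (NNReal.coe_le_one.2 hp)),
    ENNReal.ofReal_sub _ p.coe_nonneg]
  simp

section Thinning

variable {Ω : Type*} [MeasurableSpace Ω] {μ : Measure Ω}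

set_option linter.deprecated false in
lemma lintegral_pow_thinPMF (Q : ℝ≥0∞) (hQ : Q ≤ 1) (T : ℝ≥0∞) (k : ℕ) :
    ∫⁻ n, T ^ n ∂(thinPMF Q hQ k).toMeasure = (Q * T + (1 - Q)) ^ k := by
  rw [thinPMF, ← PMF.toMeasure_map _ _ (measurable_of_countable _), lintegral_map
    (measurable_of_countable _) (measurable_of_countable _), lintegral_fintype, add_pow,
    ← Fin.sum_univ_eq_sum_range]
  refine Finset.sum_congr rfl fun i _ => ?_
  rw [PMF.toMeasure_apply_singleton _ _ (measurableSet_singleton i)]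
  erw [PMF.binomial_apply]
  push_cast [ENNReal.coe_toNNReal (ne_top_of_le_ne_top ENNReal.one_ne_top hQ)]
  ring

lemma lintegral_pow_of_map_eq_bind_thinPMF {X Z : Ω → ℕ} (hX : Measurable X) (hZ : Measurable Z)
    {Q : ℝ≥0∞} (hQ : Q ≤ 1)
    (hlaw : μ.map X = (μ.map Z).bind fun k => (thinPMF Q hQ k).toMeasure) (T : ℝ≥0∞) :
    ∫⁻ ω, T ^ X ω ∂μ = ∫⁻ ω, (Q * T + (1 - Q)) ^ Z ω ∂μ := by
  rw [← lintegral_map (measurable_of_countable _) hX, hlaw, Measure.lintegral_bind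
    (measurable_of_countable _).aemeasurable (measurable_of_countable _).aemeasurable]
  simp_rw [lintegral_pow_thinPMF]
  rw [lintegral_map (measurable_of_countable _) hZ]

lemma lintegral_ofReal_pow_of_map_eq_bind_thinPMF {X Z : Ω → ℕ} (hX : Measurable X)
    (hZ : Measurable Z) {Q : ℝ≥0∞} (hQ : Q ≤ 1)
    (hlaw : μ.map X = (μ.map Z).bind fun k => (thinPMF Q hQ k).toMeasure)
    {q : ℝ} (hQq : Q = ENNReal.ofReal q) (hq : 0 ≤ q) {t : ℝ} (ht : 1 ≤ t) :
    ∫⁻ ω, ENNReal.ofReal t ^ X ω ∂μ = ∫⁻ ω, ENNReal.ofReal ((1 + (t - 1) * q) ^ Z ω) ∂μ := by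
  have hq1 : q ≤ 1 := ENNReal.ofReal_le_one.1 (hQq ▸ hQ)
  rw [lintegral_pow_of_map_eq_bind_thinPMF hX hZ hQ hlaw, hQq,
    ENNReal.ofReal_mul_ofReal_add_one_sub hq hq1 ht]
  simp_rw [← ENNReal.ofReal_pow (by nlinarith : 0 ≤ 1 + (t - 1) * q)]

end Thinning

lemma lintegral_pow_sum_eq_prod_of_iIndepFun {Ω ι : Type*} [MeasurableSpace Ω] {μ : Measure Ω}
    {Y : ι → Ω → ℕ} (hY : ∀ i, Measurable (Y i)) (hindep : iIndepFun Y μ) (T : ℝ≥0∞)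
    (s : Finset ι) :
    ∫⁻ ω, T ^ (∑ i ∈ s, Y i ω) ∂μ = ∏ i ∈ s, ∫⁻ ω, T ^ Y i ω ∂μ := by
  simp_rw [← Finset.prod_pow_eq_pow_sum]
  exact lintegral_prod_eq_prod_lintegral_of_indepFun s (fun i ω => T ^ Y i ω)
    (hindep.comp (fun _ n => T ^ n) fun _ => measurable_of_countable _)
    fun i => (measurable_of_countable _).comp (hY i)

lemma tprod_eq_iSup_prod_range_of_one_le {α : Type*} [CommMonoid α] [CompleteLinearOrder α]
    [IsOrderedMonoid α] [TopologicalSpace α] [OrderTopology α] {f : ℕ → α} (hf : ∀ n, 1 ≤ f n) :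
    ∏' n, f n = ⨆ N, ∏ n ∈ Finset.range N, f n := by
  have hmono : Monotone fun N => ∏ n ∈ Finset.range N, f n := fun _ _ h =>
    Finset.prod_le_prod_of_subset_of_one_le' (Finset.range_mono h) fun n _ _ => hf n
  exact tendsto_nhds_unique
    (hasProd_of_isLUB_of_one_le _ hf (isLUB_iSup)).multipliable.hasProd.tendsto_prod_nat
    (tendsto_atTop_iSup hmono)

lemma ENNReal.prod_one_add_le_ofReal_exp_tsum {ι : Type*} {a : ι → ℝ≥0∞} (ha : ∑' i, a i ≠ ∞)
    (s : Finset ι) : ∏ i ∈ s, (1 + a i) ≤ ENNReal.ofReal (Real.exp (∑' i, a i).toReal) := by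
  have hfin : ∀ i, a i ≠ ∞ := ENNReal.ne_top_of_tsum_ne_top ha
  calc ∏ i ∈ s, (1 + a i) = ENNReal.ofReal (∏ i ∈ s, (1 + (a i).toReal)) := by
        rw [ENNReal.ofReal_prod_of_nonneg fun i _ => by positivity]
        refine Finset.prod_congr rfl fun i _ => ?_
        rw [ENNReal.ofReal_add zero_le_one ENNReal.toReal_nonneg, ENNReal.ofReal_one,
          ENNReal.ofReal_toReal (hfin i)]
    _ ≤ ENNReal.ofReal (Real.exp (∑ i ∈ s, (a i).toReal)) :=
        ENNReal.ofReal_le_ofReal (Real.prod_one_add_le_exp_sum s fun _ => ENNReal.toReal_nonneg)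
    _ ≤ ENNReal.ofReal (Real.exp (∑' i, a i).toReal) := by
        rw [← ENNReal.toReal_sum fun i _ => hfin i]
        gcongr
        exact ENNReal.sum_le_tsum s

lemma ENNReal.tprod_lt_top_of_le_one_add {ι : Type*} {f a : ι → ℝ≥0∞} (hf : ∀ i, f i ≤ 1 + a i)
    (ha : ∑' i, a i ≠ ∞) : ∏' i, f i < ∞ :=
  (tprod_le_of_prod_le' (by simp) fun s => (Finset.prod_le_prod' fun i _ => hf i).trans
    (ENNReal.prod_one_add_le_ofReal_exp_tsum ha s)).trans_lt ENNReal.ofReal_lt_top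

lemma monotone_pow_sum_range {M : Type*} [Monoid M] [Preorder M] [MulLeftMono M] {T : M}
    (hT : 1 ≤ T) (y : ℕ → ℕ) : Monotone fun N => T ^ ∑ j ∈ Finset.range N, y j :=
  fun _ _ h => pow_le_pow_right' hT (Finset.sum_le_sum_of_subset (Finset.range_mono h))

lemma one_add_pow_le_one_add_div_mul_exp_sub_one {θ K₀ : ℝ} (hθ : 0 ≤ θ) (hθK : θ ≤ K₀)
    (hK₀ : 0 < K₀) (z : ℕ) : (1 + θ) ^ z ≤ 1 + θ / K₀ * (Real.exp (K₀ * z) - 1) := by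
  have hu : θ / K₀ ≤ 1 := div_le_one_of_le₀ hθK hK₀.le
  -- convexity of `exp` between `0` and `K₀ z`, at the point `θ z = (θ / K₀) (K₀ z)`
  have hconv := convexOn_exp.2 (Set.mem_univ 0) (Set.mem_univ (K₀ * z)) (sub_nonneg.2 hu)
    (div_nonneg hθ hK₀.le) (sub_add_cancel 1 _)
  have hθz : (1 - θ / K₀) • (0 : ℝ) + (θ / K₀) • (K₀ * z) = θ * z := by
    rw [smul_zero, zero_add, smul_eq_mul, ← mul_assoc, div_mul_cancel₀ θ hK₀.ne']
  rw [hθz, smul_eq_mul, smul_eq_mul, Real.exp_zero, mul_one] at hconv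
  calc (1 + θ) ^ z ≤ Real.exp θ ^ z := by
        gcongr
        linarith [Real.add_one_le_exp θ]
    _ = Real.exp (θ * z) := by rw [← Real.exp_nat_mul, mul_comm]
    _ ≤ 1 + θ / K₀ * (Real.exp (K₀ * z) - 1) := by linarith

lemma lintegral_ofReal_one_add_pow_le {Ω : Type*} [MeasurableSpace Ω] {μ : Measure Ω}
    [IsProbabilityMeasure μ] {Z : Ω → ℕ} (hZ : Measurable Z) {θ K₀ : ℝ} (hθ : 0 ≤ θ)
    (hθK : θ ≤ K₀) (hK₀ : 0 < K₀) :
    ∫⁻ ω, ENNReal.ofReal ((1 + θ) ^ Z ω) ∂μ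
      ≤ 1 + ENNReal.ofReal (θ / K₀) * (∫⁻ ω, ENNReal.ofReal (Real.exp (K₀ * Z ω)) ∂μ - 1) := by
  have hexp_one : ∀ z : ℕ, 1 ≤ Real.exp (K₀ * z) := fun z => Real.one_le_exp (by positivity)
  have hmeas : Measurable fun ω => ENNReal.ofReal (Real.exp (K₀ * Z ω)) :=
    (measurable_of_countable fun z : ℕ => ENNReal.ofReal (Real.exp (K₀ * z))).comp hZ
  calc ∫⁻ ω, ENNReal.ofReal ((1 + θ) ^ Z ω) ∂μ
      ≤ ∫⁻ ω, (1 + ENNReal.ofReal (θ / K₀) * (ENNReal.ofReal (Real.exp (K₀ * Z ω)) - 1)) ∂μ := by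
        refine lintegral_mono fun ω => ?_
        rw [← ENNReal.ofReal_one, ← ENNReal.ofReal_sub _ zero_le_one,
          ← ENNReal.ofReal_mul (div_nonneg hθ hK₀.le),
          ← ENNReal.ofReal_add zero_le_one (by nlinarith [hexp_one (Z ω), div_nonneg hθ hK₀.le])]
        exact ENNReal.ofReal_le_ofReal (one_add_pow_le_one_add_div_mul_exp_sub_one hθ hθK hK₀ _)
    _ = 1 + ENNReal.ofReal (θ / K₀) * (∫⁻ ω, ENNReal.ofReal (Real.exp (K₀ * Z ω)) ∂μ - 1) := by
        rw [lintegral_add_left measurable_const, lintegral_const_mul _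
          (f := fun ω => ENNReal.ofReal (Real.exp (K₀ * Z ω)) - 1) (hmeas.sub measurable_const),
          lintegral_sub measurable_const (by simp)
            (ae_of_all _ fun ω => ENNReal.one_le_ofReal.2 (hexp_one _))]
        simp

lemma tprod_lintegral_ofReal_one_add_mul_pow_pow_lt_top {Ω : Type*} [MeasurableSpace Ω]
    {μ : Measure Ω} [IsProbabilityMeasure μ] {Z : Ω → ℕ} (hZ : Measurable Z) {θ K₀ q : ℝ}
    (hθ : 0 ≤ θ) (hθK : θ ≤ K₀) (hK₀ : 0 < K₀) (hq0 : 0 ≤ q) (hq1 : q < 1)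
    (hM : ∫⁻ ω, ENNReal.ofReal (Real.exp (K₀ * Z ω)) ∂μ ≠ ∞) :
    ∏' n : ℕ, ∫⁻ ω, ENNReal.ofReal ((1 + θ * q ^ n) ^ Z ω) ∂μ < ∞ := by
  have hθn : ∀ n : ℕ, 0 ≤ θ * q ^ n := fun n => mul_nonneg hθ (pow_nonneg hq0 n)
  refine ENNReal.tprod_lt_top_of_le_one_add (fun n => lintegral_ofReal_one_add_pow_le hZ (hθn n)
    ((mul_le_of_le_one_right hθ (pow_le_one₀ hq0 hq1.le)).trans hθK) hK₀) ?_
  rw [ENNReal.tsum_mul_right, ← ENNReal.ofReal_tsum_of_nonneg (fun n => div_nonneg (hθn n) hK₀.le)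
    (((summable_geometric_of_lt_one hq0 hq1).mul_left _).div_const _)]
  exact ENNReal.mul_ne_top ENNReal.ofReal_ne_top (ENNReal.sub_ne_top hM)

lemma ofReal_exp_mul_tsum_eq_iSup {y : ℕ → ℕ} {K : ℝ} (hK : 0 < K)
    (hy : ⨆ N, ENNReal.ofReal (Real.exp K) ^ (∑ j ∈ Finset.range N, y j) ≠ ∞) :
    ENNReal.ofReal (Real.exp (K * ∑' j, (y j : ℝ)))
      = ⨆ N, ENNReal.ofReal (Real.exp K) ^ (∑ j ∈ Finset.range N, y j) := by
  have hmono := monotone_pow_sum_range (ENNReal.one_le_ofReal.2 (Real.one_le_exp hK.le)) y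
  have hpow : ∀ n : ℕ, ENNReal.ofReal (Real.exp K) ^ n = ENNReal.ofReal (Real.exp (K * n)) :=
    fun n => by rw [← ENNReal.ofReal_pow (Real.exp_pos K).le, ← Real.exp_nat_mul, mul_comm]
  simp only [hpow, Nat.cast_sum] at hy hmono ⊢
  -- bounded exponentials of the partial sums force the partial sums to be bounded
  have hsum : Summable fun j => (y j : ℝ) := by
    set c := (⨆ N, ENNReal.ofReal (Real.exp (K * ∑ j ∈ Finset.range N, (y j : ℝ)))).toReal
    refine summable_of_sum_range_le (c := c / K) (fun _ => Nat.cast_nonneg _)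
      fun N => (le_div_iff₀' hK).2 ?_
    refine (le_add_of_nonneg_right zero_le_one).trans ((Real.add_one_le_exp _).trans ?_)
    exact (ENNReal.ofReal_le_iff_le_toReal hy).1 (le_iSup (fun N => ENNReal.ofReal _) N)
  refine tendsto_nhds_unique ?_ (tendsto_atTop_iSup hmono)
  exact ((ENNReal.continuous_ofReal.comp (Real.continuous_exp.comp
    (continuous_const_mul K))).tendsto _).comp hsum.hasSum.tendsto_sum_nat

lemma lintegral_ofReal_exp_mul_tsum_eq_iSup {Ω : Type*} [MeasurableSpace Ω] {μ : Measure Ω}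
    {Y : ℕ → Ω → ℕ} (hY : ∀ j, Measurable (Y j)) {K : ℝ} (hK : 0 < K)
    (hfin : ⨆ N, ∫⁻ ω, ENNReal.ofReal (Real.exp K) ^ (∑ j ∈ Finset.range N, Y j ω) ∂μ ≠ ∞) :
    ∫⁻ ω, ENNReal.ofReal (Real.exp (K * ∑' j, (Y j ω : ℝ))) ∂μ
      = ⨆ N, ∫⁻ ω, ENNReal.ofReal (Real.exp K) ^ (∑ j ∈ Finset.range N, Y j ω) ∂μ := by
  have hmeas : ∀ N, Measurable fun ω => ENNReal.ofReal (Real.exp K) ^ ∑ j ∈ Finset.range N, Y j ω :=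
    fun N => (measurable_of_countable _).comp (Finset.measurable_fun_sum _ fun j _ => hY j)
  have hmono : Monotone fun N ω => ENNReal.ofReal (Real.exp K) ^ ∑ j ∈ Finset.range N, Y j ω :=
    fun _ _ h ω => monotone_pow_sum_range (ENNReal.one_le_ofReal.2 (Real.one_le_exp hK.le))
      (Y · ω) h
  rw [← lintegral_iSup hmeas hmono] at hfin ⊢
  refine lintegral_congr_ae ?_
  filter_upwards [ae_lt_top (Measurable.iSup hmeas) hfin] with ω hω
  exact ofReal_exp_mul_tsum_eq_iSup hK hω.ne

/-- If `Z_0` has a finite exponential moment `E[e^{K₀ Z_0}] < ∞`, then for all sufficiently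
small `K > 0` the stationary variable `W^{(0)} = Σ_j Y_j` (with `Y_j` independent,
conditionally `Binomial(Z, (1−p)^j)` thinnings of independent copies of `Z_0`) satisfies
`E[e^{K W^{(0)}}] = Π_{n=0}^∞ E[(1 + (e^K − 1)(1−p)^n)^{Z_0}] < ∞`. -/
theorem stationary_series_exponential_moment
    {Ω : Type*} [MeasureSpace Ω] [IsProbabilityMeasure (ℙ : Measure Ω)]
    (p : ℝ≥0) (hp0 : 0 < p) (hp1 : p < 1)
    (Z : Ω → ℕ) (hZmeas : Measurable Z)
    (K₀ : ℝ) (hK₀ : 0 < K₀)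
    (hZexp : ∫⁻ ω, ENNReal.ofReal (Real.exp (K₀ * (Z ω : ℝ))) < ∞)
    (Y : ℕ → Ω → ℕ) (hYmeas : ∀ j, Measurable (Y j))
    (hYindep : iIndepFun Y ℙ)
    (hYlaw : ∀ j : ℕ, Measure.map (Y j) ℙ
      = (Measure.map Z ℙ).bind
          (fun k => (thinPMF ((1 - (p : ℝ≥0∞)) ^ j) (pow_le_one' (by simp) j) k).toMeasure)) :
    ∃ K' : ℝ, 0 < K' ∧ ∀ K : ℝ, 0 < K → K ≤ K' →
      (∫⁻ ω, ENNReal.ofReal (Real.exp (K * ∑' j : ℕ, (Y j ω : ℝ)))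
          = ∏' n : ℕ,
              ∫⁻ ω, ENNReal.ofReal ((1 + (Real.exp K - 1) * (1 - (p : ℝ)) ^ n) ^ (Z ω))) ∧
      (∫⁻ ω, ENNReal.ofReal (Real.exp (K * ∑' j : ℕ, (Y j ω : ℝ)))) < ∞ := by
  set q : ℝ := 1 - p
  have hq0 : 0 ≤ q := sub_nonneg.2 hp1.le
  have hq1 : q < 1 := sub_lt_self 1 hp0
  -- `K ≤ log (1 + K₀)` is exactly `e^K - 1 ≤ K₀`, the range of the convexity bound
  refine ⟨Real.log (1 + K₀), Real.log_pos (by linarith), fun K hK hKle => ?_⟩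
  have hθ : 0 ≤ Real.exp K - 1 := sub_nonneg.2 (Real.one_le_exp hK.le)
  have hθK : Real.exp K - 1 ≤ K₀ := by
    linarith [Real.exp_le_exp.2 hKle, Real.exp_log (by linarith : 0 < 1 + K₀)]
  set factor := fun n : ℕ => ∫⁻ ω, ENNReal.ofReal ((1 + (Real.exp K - 1) * q ^ n) ^ Z ω)
  have hpartial : ∀ N, ∫⁻ ω, ENNReal.ofReal (Real.exp K) ^ (∑ j ∈ Finset.range N, Y j ω)
      = ∏ n ∈ Finset.range N, factor n := fun N => by
    rw [lintegral_pow_sum_eq_prod_of_iIndepFun hYmeas hYindep]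
    exact Finset.prod_congr rfl fun n _ => lintegral_ofReal_pow_of_map_eq_bind_thinPMF
      (hYmeas n) hZmeas _ (hYlaw n) (ENNReal.one_sub_coe_pow hp1.le n) (pow_nonneg hq0 n)
      (Real.one_le_exp hK.le)
  have hfactor_one : ∀ n, 1 ≤ factor n := fun n => (le_iInf fun ω => ENNReal.one_le_ofReal.2
    (one_le_pow₀ (le_add_of_nonneg_right (mul_nonneg hθ (pow_nonneg hq0 n))))).trans
      (iInf_le_lintegral _)
  have hfin : ∏' n, factor n < ∞ :=
    tprod_lintegral_ofReal_one_add_mul_pow_pow_lt_top hZmeas hθ hθK hK₀ hq0 hq1 hZexp.ne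
  have hlhs := lintegral_ofReal_exp_mul_tsum_eq_iSup hYmeas hK (μ := ℙ)
  simp only [hpartial, ← tprod_eq_iSup_prod_range_of_one_le hfactor_one] at hlhs
  exact ⟨hlhs hfin.ne, hlhs hfin.ne ▸ hfin⟩
end
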